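/- Let β, γ be real numbers with 0 < |β| < 1, let (X_t)_{t∈ℤ} be identically distributed real random variables with 𝔼[|X_0|] < ∞, and for ν ∈ ℝ, T ∈ ℕ let g_{ν,T}(t) = e^{2πiνt}/√(2T+1) for −T ≤ t ≤ T and 0 otherwise, z_ν := e^{2πiν}, and f_{ν,T} := γ S (I − βS)^{−1} g_{ν,T}. Then the random variable R_{ν,T} := Σ_{t∈ℤ} (f_{ν,T}(t) − γ z_ν (1 − β z_ν)^{−1} g_{ν,T}(t)) X_t converges in L¹ and satisfies 𝔼[|R_{ν,T}|] ≤ (2/√(2T+1)) · (|γ|/|β|) · (1 − |β|)^{−2} · 𝔼[|X_0|]. -/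

import Mathlib

open MeasureTheory ProbabilityTheory Filter

/-- The normalized complex wave `g_{ν,T}` of frequency `ν` on the window `[-T, T]`:
`g_{ν,T} t = e^{2πiνt} / √(2T+1)` for `-T ≤ t ≤ T` and `0` otherwise. -/
noncomputable def waveWindow (ν : ℝ) (T : ℕ) : ℤ → ℂ :=
  fun t => if -(T : ℤ) ≤ t ∧ t ≤ (T : ℤ)
    then Complex.exp (2 * Real.pi * Complex.I * (ν : ℂ) * (t : ℂ)) / (Real.sqrt (2 * T + 1) : ℂ)
    else 0

/-- The von Neumann inverse `(I - βS)⁻¹ = ∑_{j ≥ 0} (βS)^j` applied to a complex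
sequence `g`, where `S` is the shift `(S g) t = g (t + 1)`. -/
noncomputable def vonNeumannInvC (β : ℝ) (g : ℤ → ℂ) : ℤ → ℂ :=
  fun t => ∑' j : ℕ, (β : ℂ) ^ j * g (t + j)

/-- The kernel `f_{ν,T} = γ S (I - βS)⁻¹ g_{ν,T}`. -/
noncomputable def fNuT (β γ ν : ℝ) (T : ℕ) : ℤ → ℂ :=
  fun t => (γ : ℂ) * vonNeumannInvC β (waveWindow ν T) (t + 1)

/-! Expanding `(I - βS)⁻¹` as a geometric series, the kernel
`h = f_{ν,T} - γ z_ν (1 - β z_ν)⁻¹ g_{ν,T}` becomes `h t = γ ∑_j β^j (g (t+1+j) - z_ν^(j+1) g t)`.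
Since `g = g_{ν,T}` is `z_ν^t / √(2T+1)` on the window `[-T, T]`, the `j`-th term vanishes unless
exactly one of `t`, `t+1+j` lies in the window, which happens for at most `2(j+1)` values of `t`.
Summing first over `t` and then over `j` gives
`‖h‖₁ ≤ 2|γ|/√(2T+1) ∑_j (j+1)|β|^j = 2|γ| / (√(2T+1) (1-|β|)²)`.
The series `∑_t h t X_t` then converges absolutely in the Banach space `L¹`, because
`‖h t X_t‖₁ = |h t| 𝔼|X_0|`. -/

open scoped symmDiff ENNReal Topology

theorem MeasureTheory.exists_memLp_tendsto_eLpNorm_sub_finsetSum {Ω E ι : Type*}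
    {m : MeasurableSpace Ω} {μ : Measure Ω} [NormedAddCommGroup E] [CompleteSpace E]
    {p : ℝ≥0∞} [Fact (1 ≤ p)]
    (F : ι → Ω → E) (hF : ∀ i, MemLp (F i) p μ) (hsum : ∑' i, eLpNorm (F i) p μ ≠ ∞) :
    ∃ R : Ω → E, MemLp R p μ ∧
      Tendsto (fun s : Finset ι => eLpNorm (fun ω => R ω - ∑ i ∈ s, F i ω) p μ) atTop (𝓝 0) ∧
      eLpNorm R p μ ≤ ∑' i, eLpNorm (F i) p μ := by
  set c : ι → Lp E p μ := fun i => (hF i).toLp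
  have hc : Summable c := by
    refine Summable.of_norm ?_
    simpa [c, Lp.norm_toLp] using ENNReal.summable_toReal hsum
  refine ⟨⇑(∑' i, c i), Lp.memLp _, ?_, ?_⟩
  · refine ((Lp.tendsto_Lp_iff_tendsto_eLpNorm' _ _).1 hc.hasSum).congr fun s => ?_
    rw [eLpNorm_sub_comm]
    refine eLpNorm_congr_ae ?_
    filter_upwards [Lp.coeFn_fun_finsetSum s c,
      (eventually_all_finset s).2 fun i _ => (hF i).coeFn_toLp] with ω hsum_eq hc_eq
    simp only [Pi.sub_apply, hsum_eq]
    rw [Finset.sum_congr rfl hc_eq]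
  · calc eLpNorm (⇑(∑' i, c i)) p μ = ‖∑' i, c i‖ₑ := (Lp.enorm_def _).symm
      _ ≤ ∑' i, ‖c i‖ₑ := enorm_tsum_le_tsum_enorm
      _ = ∑' i, eLpNorm (F i) p μ := by simp [c, Lp.enorm_toLp]

theorem Complex.enorm_ofReal (x : ℝ) : ‖(x : ℂ)‖ₑ = ‖x‖ₑ := by
  rw [← enorm_norm, Complex.norm_real, enorm_norm]

theorem exists_memLp_tendsto_eLpNorm_sub_sum_mul_of_identDistrib {Ω ι : Type*}
    {m : MeasurableSpace Ω} {μ : Measure Ω} {p : ℝ≥0∞} [Fact (1 ≤ p)]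
    (c : ι → ℂ) (hc : ∑' i, ‖c i‖ₑ ≠ ∞) (X : ι → Ω → ℝ) (Y : Ω → ℝ)
    (hX : ∀ i, IdentDistrib (X i) Y μ μ) (hY : MemLp Y p μ) :
    ∃ R : Ω → ℂ, MemLp R p μ ∧
      Tendsto (fun s : Finset ι => eLpNorm (fun ω => R ω - ∑ i ∈ s, c i * X i ω) p μ)
        atTop (𝓝 0) ∧
      eLpNorm R p μ ≤ (∑' i, ‖c i‖ₑ) * eLpNorm Y p μ := by
  have hnorm (i : ι) : eLpNorm (fun ω => c i * X i ω) p μ = ‖c i‖ₑ * eLpNorm Y p μ := by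
    rw [show (fun ω => c i * X i ω) = c i • fun ω => (X i ω : ℂ) from rfl,
      eLpNorm_const_smul, ← (hX i).eLpNorm_eq,
      eLpNorm_congr_enorm_ae (ae_of_all _ fun ω => Complex.enorm_ofReal (X i ω))]
  have hsum : ∑' i, eLpNorm (fun ω => c i * X i ω) p μ = (∑' i, ‖c i‖ₑ) * eLpNorm Y p μ := by
    simp_rw [hnorm, ENNReal.tsum_mul_right]
  rw [← hsum]
  refine exists_memLp_tendsto_eLpNorm_sub_finsetSum _ (fun i => ?_)
    (hsum ▸ ENNReal.mul_ne_top hc hY.eLpNorm_ne_top)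
  exact ((hX i).memLp_iff.2 hY).ofReal.const_mul (c i)

theorem Complex.norm_exp_two_pi_I_mul_mul_intCast (ν : ℝ) (s : ℤ) :
    ‖Complex.exp (2 * Real.pi * Complex.I * ν * s)‖ = 1 := by
  rw [show 2 * (Real.pi : ℂ) * Complex.I * ν * s = ((2 * Real.pi * ν * s : ℝ) : ℂ) * Complex.I by
    push_cast; ring]
  exact Complex.norm_exp_ofReal_mul_I _

theorem Int.encard_preimage_add_Icc_symmDiff_le (a b : ℤ) (k : ℕ) :
    (((· + (k : ℤ)) ⁻¹' Set.Icc a b) ∆ Set.Icc a b).encard ≤ 2 * k := by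
  have hsub : ((· + (k : ℤ)) ⁻¹' Set.Icc a b) ∆ Set.Icc a b
      ⊆ ↑(Finset.Icc (a - k) (a - 1) ∪ Finset.Icc (b - k + 1) b) := by
    intro t ht
    simp only [Set.mem_symmDiff, Set.mem_preimage, Set.mem_Icc] at ht
    simp only [Finset.coe_union, Finset.coe_Icc, Set.mem_union, Set.mem_Icc]
    omega
  calc _ ≤ ((Finset.Icc (a - k) (a - 1) ∪ Finset.Icc (b - k + 1) b : Finset ℤ) : Set ℤ).encard :=
        Set.encard_le_encard hsub
    _ ≤ ((Finset.Icc (a - k) (a - 1)).card + (Finset.Icc (b - k + 1) b).card : ℕ) := by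
        rw [Set.encard_coe_eq_coe_finsetCard]
        exact_mod_cast Finset.card_union_le _ _
    _ ≤ 2 * k := by
        rw [Int.card_Icc, Int.card_Icc]
        norm_cast
        omega

theorem ENNReal.tsum_add_one_mul_ofReal_pow {r : ℝ} (hr₀ : 0 ≤ r) (hr₁ : r < 1) :
    ∑' n : ℕ, ((n : ℝ≥0∞) + 1) * ENNReal.ofReal r ^ n = ENNReal.ofReal ((1 - r) ^ 2)⁻¹ := by
  have hr : ‖r‖ < 1 := by rwa [Real.norm_of_nonneg hr₀]
  have hterm (n : ℕ) : ((n : ℝ≥0∞) + 1) * ENNReal.ofReal r ^ n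
      = ENNReal.ofReal (((n + 1).choose 1 : ℕ) * r ^ n) := by
    rw [Nat.choose_one_right, ENNReal.ofReal_mul (by positivity), ENNReal.ofReal_pow hr₀]
    norm_cast
  simp_rw [hterm]
  rw [← ENNReal.ofReal_tsum_of_nonneg (fun n => by positivity)
    (summable_choose_mul_geometric_of_norm_lt_one 1 hr),
    tsum_choose_mul_geometric_of_norm_lt_one 1 hr, one_div]

theorem summable_ofReal_pow_mul_of_norm_le {β : ℝ} (hβ : |β| < 1) {g : ℕ → ℂ} {C : ℝ}
    (hg : ∀ j, ‖g j‖ ≤ C) : Summable fun j : ℕ => (β : ℂ) ^ j * g j := by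
  refine (summable_geometric_of_lt_one (abs_nonneg β) hβ |>.mul_right C).of_norm_bounded
    fun j => ?_
  rw [norm_mul, norm_pow, Complex.norm_real, Real.norm_eq_abs]
  exact mul_le_mul_of_nonneg_left (hg j) (pow_nonneg (abs_nonneg β) j)

theorem vonNeumannInvC_add_one_sub_eq_tsum {β : ℝ} (hβ : |β| < 1) {z : ℂ} (hz : ‖z‖ ≤ 1)
    {g : ℤ → ℂ} {C : ℝ} (hg : ∀ s, ‖g s‖ ≤ C) (t : ℤ) :
    vonNeumannInvC β g (t + 1) - z * (1 - β * z)⁻¹ * g t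
      = ∑' j : ℕ, (β : ℂ) ^ j * (g (t + 1 + j) - z ^ (j + 1) * g t) := by
  have hβz : ‖(β : ℂ) * z‖ < 1 := by
    rw [norm_mul, Complex.norm_real, Real.norm_eq_abs]
    nlinarith [abs_nonneg β, norm_nonneg z]
  have hgeom : z * (1 - β * z)⁻¹ * g t = ∑' j : ℕ, (β : ℂ) ^ j * (z ^ (j + 1) * g t) := by
    rw [← tsum_geometric_of_norm_lt_one hβz, ← tsum_mul_left, ← tsum_mul_right]
    exact tsum_congr fun j => by ring
  have hsum_g := summable_ofReal_pow_mul_of_norm_le hβ fun j => hg (t + 1 + j)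
  have hsum_z := summable_ofReal_pow_mul_of_norm_le hβ (g := fun j => z ^ (j + 1) * g t)
    fun j => by
      rw [norm_mul, norm_pow]
      exact mul_le_of_le_one_left (norm_nonneg _) (pow_le_one₀ (norm_nonneg z) hz) |>.trans (hg t)
  rw [hgeom, vonNeumannInvC, ← hsum_g.tsum_sub hsum_z]
  exact tsum_congr fun j => (mul_sub _ _ _).symm

theorem waveWindow_eq_indicator (ν : ℝ) (T : ℕ) :
    waveWindow ν T = (Set.Icc (-(T : ℤ)) T).indicator fun s =>
      Complex.exp (2 * Real.pi * Complex.I * ν * s) / (Real.sqrt (2 * T + 1) : ℂ) := by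
  ext s
  simp only [waveWindow, Set.indicator, Set.mem_Icc]

theorem norm_waveWindow_le (ν : ℝ) (T : ℕ) (s : ℤ) :
    ‖waveWindow ν T s‖ ≤ (Real.sqrt (2 * T + 1))⁻¹ := by
  rw [waveWindow_eq_indicator]
  refine (norm_indicator_le_norm_self _ _).trans_eq ?_
  rw [norm_div, Complex.norm_exp_two_pi_I_mul_mul_intCast, Complex.norm_real,
    Real.norm_of_nonneg (Real.sqrt_nonneg _), one_div]

theorem enorm_waveWindow_add_sub (ν : ℝ) (T : ℕ) (t : ℤ) (k : ℕ) :
    ‖waveWindow ν T (t + k) - Complex.exp (2 * Real.pi * Complex.I * ν) ^ k * waveWindow ν T t‖ₑ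
      = (((· + (k : ℤ)) ⁻¹' Set.Icc (-(T : ℤ)) T) ∆ Set.Icc (-(T : ℤ)) T).indicator
          (fun _ => ‖(Real.sqrt (2 * T + 1) : ℂ)⁻¹‖ₑ) t := by
  have hnorm (s : ℤ) : ‖Complex.exp (2 * Real.pi * Complex.I * ν * s)‖ₑ = 1 := by
    rw [← enorm_norm, Complex.norm_exp_two_pi_I_mul_mul_intCast, enorm_one]
  have hz : ‖Complex.exp (2 * Real.pi * Complex.I * ν) ^ k‖ₑ = 1 := by
    simpa [enorm_pow] using congrArg (· ^ k) (hnorm 1)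
  have hshift : Complex.exp (2 * Real.pi * Complex.I * ν) ^ k
      * Complex.exp (2 * Real.pi * Complex.I * ν * t)
      = Complex.exp (2 * Real.pi * Complex.I * ν * ((t + k : ℤ) : ℂ)) := by
    rw [← Complex.exp_nat_mul, ← Complex.exp_add]; push_cast; ring_nf
  set W := Set.Icc (-(T : ℤ)) T
  simp only [waveWindow_eq_indicator, div_eq_mul_inv]
  by_cases h₁ : t + (k : ℤ) ∈ W <;> by_cases h₂ : t ∈ W
  · rw [Set.indicator_of_mem h₁, Set.indicator_of_mem h₂,
      Set.indicator_of_notMem (show t ∉ ((· + (k : ℤ)) ⁻¹' W) ∆ W by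
        simp [Set.mem_symmDiff, h₁, h₂]),
      ← mul_assoc, hshift, sub_self, enorm_zero]
  · rw [Set.indicator_of_mem h₁, Set.indicator_of_notMem h₂,
      Set.indicator_of_mem (show t ∈ ((· + (k : ℤ)) ⁻¹' W) ∆ W from Or.inl ⟨h₁, h₂⟩),
      mul_zero, sub_zero, enorm_mul, hnorm, one_mul]
  · rw [Set.indicator_of_notMem h₁, Set.indicator_of_mem h₂,
      Set.indicator_of_mem (show t ∈ ((· + (k : ℤ)) ⁻¹' W) ∆ W from Or.inr ⟨h₂, h₁⟩),
      zero_sub, enorm_neg, enorm_mul, enorm_mul, hz, hnorm, one_mul, one_mul]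
  · rw [Set.indicator_of_notMem h₁, Set.indicator_of_notMem h₂,
      Set.indicator_of_notMem (show t ∉ ((· + (k : ℤ)) ⁻¹' W) ∆ W by
        simp [Set.mem_symmDiff, h₁, h₂]),
      mul_zero, sub_zero, enorm_zero]

theorem tsum_enorm_waveWindow_add_sub_le (ν : ℝ) (T : ℕ) (k : ℕ) :
    ∑' t : ℤ, ‖waveWindow ν T (t + k)
        - Complex.exp (2 * Real.pi * Complex.I * ν) ^ k * waveWindow ν T t‖ₑ
      ≤ 2 * k * ‖(Real.sqrt (2 * T + 1) : ℂ)⁻¹‖ₑ := by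
  simp_rw [enorm_waveWindow_add_sub, ← tsum_subtype, ENNReal.tsum_set_const]
  gcongr
  exact_mod_cast Int.encard_preimage_add_Icc_symmDiff_le _ _ k

noncomputable def residualKernel (β γ ν : ℝ) (T : ℕ) (t : ℤ) : ℂ :=
  fNuT β γ ν T t
    - (γ : ℂ) * Complex.exp (2 * Real.pi * Complex.I * (ν : ℂ))
      * (1 - (β : ℂ) * Complex.exp (2 * Real.pi * Complex.I * (ν : ℂ)))⁻¹
      * waveWindow ν T t

theorem enorm_residualKernel_le {β : ℝ} (hβ : |β| < 1) (γ ν : ℝ) (T : ℕ) (t : ℤ) :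
    ‖residualKernel β γ ν T t‖ₑ ≤ ‖γ‖ₑ * ∑' j : ℕ, ‖β‖ₑ ^ j *
      ‖waveWindow ν T (t + (j + 1 : ℕ))
        - Complex.exp (2 * Real.pi * Complex.I * ν) ^ (j + 1) * waveWindow ν T t‖ₑ := by
  have hz : ‖Complex.exp (2 * Real.pi * Complex.I * ν)‖ ≤ 1 := by
    simpa using (Complex.norm_exp_two_pi_I_mul_mul_intCast ν 1).le
  have hseries := vonNeumannInvC_add_one_sub_eq_tsum hβ hz (norm_waveWindow_le ν T) t
  have hkernel : residualKernel β γ ν T t = γ * (vonNeumannInvC β (waveWindow ν T) (t + 1)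
      - Complex.exp (2 * Real.pi * Complex.I * ν)
        * (1 - β * Complex.exp (2 * Real.pi * Complex.I * ν))⁻¹ * waveWindow ν T t) := by
    simp only [residualKernel, fNuT]; ring
  rw [hkernel, hseries, enorm_mul, Complex.enorm_ofReal]
  gcongr
  refine enorm_tsum_le_tsum_enorm.trans_eq (tsum_congr fun j => ?_)
  rw [enorm_mul, enorm_pow, Complex.enorm_ofReal, Nat.cast_succ, ← add_assoc, add_right_comm]

theorem tsum_enorm_residualKernel_le {β : ℝ} (hβ : |β| < 1) (γ ν : ℝ) (T : ℕ) :
    ∑' t : ℤ, ‖residualKernel β γ ν T t‖ₑ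
      ≤ ENNReal.ofReal (2 / Real.sqrt (2 * T + 1) * |γ| * ((1 - |β|) ^ 2)⁻¹) := by
  set c := ENNReal.ofReal (Real.sqrt (2 * T + 1))⁻¹ with hc_def
  have hc : ‖(Real.sqrt (2 * T + 1) : ℂ)⁻¹‖ₑ = c := by
    rw [← Complex.ofReal_inv, Complex.enorm_ofReal,
      Real.enorm_of_nonneg (inv_nonneg.2 (Real.sqrt_nonneg _))]
  calc ∑' t : ℤ, ‖residualKernel β γ ν T t‖ₑ
      ≤ ∑' t : ℤ, ‖γ‖ₑ * ∑' j : ℕ, ‖β‖ₑ ^ j *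
          ‖waveWindow ν T (t + (j + 1 : ℕ))
            - Complex.exp (2 * Real.pi * Complex.I * ν) ^ (j + 1) * waveWindow ν T t‖ₑ :=
        ENNReal.tsum_le_tsum (enorm_residualKernel_le hβ γ ν T)
    _ = ‖γ‖ₑ * ∑' j : ℕ, ‖β‖ₑ ^ j * ∑' t : ℤ,
          ‖waveWindow ν T (t + (j + 1 : ℕ))
            - Complex.exp (2 * Real.pi * Complex.I * ν) ^ (j + 1) * waveWindow ν T t‖ₑ := by
        rw [ENNReal.tsum_mul_left, ENNReal.tsum_comm]
        simp_rw [ENNReal.tsum_mul_left]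
    _ ≤ ‖γ‖ₑ * ∑' j : ℕ, ‖β‖ₑ ^ j * (2 * (j + 1 : ℕ) * c) := by
        gcongr with j
        exact hc ▸ tsum_enorm_waveWindow_add_sub_le ν T (j + 1)
    _ = 2 * c * ‖γ‖ₑ * ∑' j : ℕ, ((j : ℝ≥0∞) + 1) * ‖β‖ₑ ^ j := by
        rw [← ENNReal.tsum_mul_left, ← ENNReal.tsum_mul_left]
        refine tsum_congr fun j => ?_
        push_cast; ring
    _ = ENNReal.ofReal (2 / Real.sqrt (2 * T + 1) * |γ| * ((1 - |β|) ^ 2)⁻¹) := by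
        rw [Real.enorm_eq_ofReal_abs β, ENNReal.tsum_add_one_mul_ofReal_pow (abs_nonneg β) hβ,
          Real.enorm_eq_ofReal_abs γ, hc_def, ← ENNReal.ofReal_ofNat 2,
          ← ENNReal.ofReal_mul (by norm_num), ← ENNReal.ofReal_mul (by positivity),
          ← ENNReal.ofReal_mul (by positivity), div_eq_mul_inv]

theorem stmt_18_general {Ω : Type*} [MeasureSpace Ω]
    (β γ : ℝ) (hβ0 : 0 < |β|) (hβ1 : |β| < 1)
    (X : ℤ → Ω → ℝ) (hXmeas : ∀ t, Measurable (X t))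
    (hXid : ∀ t, Measure.map (X t) ℙ = Measure.map (X 0) ℙ)
    (hXint : Integrable (X 0) ℙ)
    (ν : ℝ) (T : ℕ) :
    ∃ R : Ω → ℂ,
      Integrable R ℙ ∧
      Tendsto (fun N : ℕ =>
          eLpNorm (fun ω => R ω - ∑ t ∈ Finset.Icc (-(N : ℤ)) (N : ℤ),
              (fNuT β γ ν T t
                - (γ : ℂ) * Complex.exp (2 * Real.pi * Complex.I * (ν : ℂ))
                  * (1 - (β : ℂ) * Complex.exp (2 * Real.pi * Complex.I * (ν : ℂ)))⁻¹
                  * waveWindow ν T t) * (X t ω : ℂ)) 1 ℙ)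
        atTop (nhds 0) ∧
      ∫ ω, ‖R ω‖ ∂ℙ
        ≤ 2 / Real.sqrt (2 * T + 1) * (|γ| / |β|) * ((1 - |β|) ^ 2)⁻¹ * ∫ ω, |X 0 ω| ∂ℙ := by
  set K := 2 / Real.sqrt (2 * T + 1) * |γ| * ((1 - |β|) ^ 2)⁻¹ with hK_def
  have hkernel : ∑' t, ‖residualKernel β γ ν T t‖ₑ ≤ ENNReal.ofReal K :=
    tsum_enorm_residualKernel_le hβ1 γ ν T
  have hX0 : MemLp (X 0) 1 ℙ := memLp_one_iff_integrable.2 hXint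
  obtain ⟨R, hR, hlim, hRnorm⟩ := exists_memLp_tendsto_eLpNorm_sub_sum_mul_of_identDistrib
    (residualKernel β γ ν T) (ne_top_of_le_ne_top ENNReal.ofReal_ne_top hkernel) X (X 0)
    (fun t => ⟨(hXmeas t).aemeasurable, (hXmeas 0).aemeasurable, hXid t⟩) hX0
  refine ⟨R, memLp_one_iff_integrable.1 hR, hlim.comp Finset.tendsto_Icc_neg, ?_⟩
  have hK : K ≤ 2 / Real.sqrt (2 * T + 1) * (|γ| / |β|) * ((1 - |β|) ^ 2)⁻¹ := by
    rw [hK_def]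
    gcongr
    exact le_div_self (abs_nonneg γ) hβ0 hβ1.le
  calc ∫ ω, ‖R ω‖ ∂ℙ = (eLpNorm R 1 ℙ).toReal := by
        rw [toReal_eLpNorm hR.1, lpNorm_one_eq_integral_norm hR.1]
    _ ≤ (ENNReal.ofReal K * eLpNorm (X 0) 1 ℙ).toReal :=
        ENNReal.toReal_mono (ENNReal.mul_ne_top ENNReal.ofReal_ne_top hX0.eLpNorm_ne_top)
          (hRnorm.trans (by gcongr))
    _ = K * ∫ ω, |X 0 ω| ∂ℙ := by
        rw [ENNReal.toReal_mul, ENNReal.toReal_ofReal (by positivity), toReal_eLpNorm hXint.1,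
          lpNorm_one_eq_integral_norm hXint.1]
        simp only [Real.norm_eq_abs]
    _ ≤ _ := by gcongr

/-- Let `0 < |β| < 1`, let `(X t)_{t ∈ ℤ}` be identically
distributed real random variables with `𝔼[|X 0|] < ∞`, and let `z_ν = e^{2πiν}`.
Then the random series
`R_{ν,T} = ∑_{t ∈ ℤ} (f_{ν,T} t - γ z_ν (1 - β z_ν)⁻¹ g_{ν,T} t) * X t`
converges in `L¹` (along the windows `[-N, N]`) and
`𝔼[|R_{ν,T}|] ≤ (2/√(2T+1)) ⬝ (|γ|/|β|) ⬝ (1 - |β|)⁻² ⬝ 𝔼[|X 0|]`. -/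
theorem stmt_18 {Ω : Type*} [MeasureSpace Ω] [IsProbabilityMeasure (ℙ : Measure Ω)]
    (β γ : ℝ) (hβ0 : 0 < |β|) (hβ1 : |β| < 1)
    (X : ℤ → Ω → ℝ) (hXmeas : ∀ t, Measurable (X t))
    (hXid : ∀ t, Measure.map (X t) ℙ = Measure.map (X 0) ℙ)
    (hXint : Integrable (X 0) ℙ)
    (ν : ℝ) (T : ℕ) :
    ∃ R : Ω → ℂ,
      Integrable R ℙ ∧
      Tendsto (fun N : ℕ =>
          eLpNorm (fun ω => R ω - ∑ t ∈ Finset.Icc (-(N : ℤ)) (N : ℤ),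
              (fNuT β γ ν T t
                - (γ : ℂ) * Complex.exp (2 * Real.pi * Complex.I * (ν : ℂ))
                  * (1 - (β : ℂ) * Complex.exp (2 * Real.pi * Complex.I * (ν : ℂ)))⁻¹
                  * waveWindow ν T t) * (X t ω : ℂ)) 1 ℙ)
        atTop (nhds 0) ∧
      ∫ ω, ‖R ω‖ ∂ℙ
        ≤ 2 / Real.sqrt (2 * T + 1) * (|γ| / |β|) * ((1 - |β|) ^ 2)⁻¹ * ∫ ω, |X 0 ω| ∂ℙ :=
  stmt_18_general β γ hβ0 hβ1 X hXmeas hXid hXint ν T
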